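/- Define F : ℝ² → ℝ² by F(x,y) = (1,0) if y = 0 and x < 0; F(x,y) = (0,−1) if x = 0 and y > 0; and F(x,y) = (1,−1) otherwise. Then: (i) through every point of ℝ² there is a unique complete integral curve of F, defining a semiflow Φ : ℝ² × ℝ₊ → ℝ²; (ii) for every point P of E¹ = {(x,0) : x < 0} or of E² = {(0,y) : y > 0} and every t > 0, the map X ↦ Φ(X,t) is discontinuous at P; (iii) for every t ≥ 0, the map X ↦ Φ(X,t) is continuous at the origin (0,0). -/

import Mathlib

open Set Filter Topology

/-- The domain `[0, T)`, where `T ∈ (0, ∞]` is encoded as an `EReal`. -/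
def eDom (T : EReal) : Set ℝ := {t : ℝ | 0 ≤ t ∧ (t : EReal) < T}

/-- `φ` is an integral curve of the (possibly discontinuous) vector field `F` on `[0,T)`
with initial condition `X₀`: `φ` is continuous on `[0,T)`, `φ 0 = X₀`, and there is a
closed countable subset `D` of `[0,T)` containing `0` such that for every `u ∈ D` there is
`v ∈ D ∪ {T}` with `v > u`, `(u,v) ∩ D = ∅`, `φ` is `C¹` on `(u,v)` with `φ' = F ∘ φ`
there, and `φ'(t) → F(φ(u))` as `t → u+`; moreover, the intervals `[u,v)` cover `[0,T)`. -/
def IsNetIntegralCurve {E : Type*} [NormedAddCommGroup E] [NormedSpace ℝ E]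
    (F : E → E) (X₀ : E) (T : EReal) (φ : ℝ → E) : Prop :=
  0 < T ∧ φ 0 = X₀ ∧ ContinuousOn φ (eDom T) ∧
  ∃ D : Set ℝ, D.Countable ∧ (0 : ℝ) ∈ D ∧ D ⊆ eDom T ∧ closure D ∩ eDom T ⊆ D ∧
    (∀ u ∈ D, ∃ v : EReal, ((∃ w ∈ D, (w : EReal) = v) ∨ v = T) ∧ (u : EReal) < v ∧
      (∀ w ∈ D, (u : EReal) < (w : EReal) → v ≤ (w : EReal)) ∧
      (∀ t : ℝ, (u : EReal) < (t : EReal) → (t : EReal) < v → HasDerivAt φ (F (φ t)) t) ∧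
      ContinuousOn (fun t => F (φ t)) {t : ℝ | (u : EReal) < (t : EReal) ∧ (t : EReal) < v} ∧
      Tendsto (fun t => F (φ t)) (𝓝[>] u) (𝓝 (F (φ u)))) ∧
    (∀ t ∈ eDom T, ∃ u ∈ D, u ≤ t ∧ Ioc u t ∩ D = ∅)

/-- The amenability trajectory condition: through every point `X` there is an integral
curve of the network vector field, defined on some interval `[0, t(X))` with `t(X) > 0`,
that stays in the event set `E^{ℰ(X)}` of `X`. -/
def AmenableTraj {E A : Type*} [NormedAddCommGroup E] [NormedSpace ℝ E]
    (f : A → E → E) (ℰ : E → A) : Prop :=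
  ∀ X : E, ∃ tX : ℝ, 0 < tX ∧ ∃ φ : ℝ → E,
    IsNetIntegralCurve (fun Y => f (ℰ Y) Y) X (tX : EReal) φ ∧
    ∀ t : ℝ, 0 ≤ t → t < tX → ℰ (φ t) = ℰ X

/-- The vector field of examples 4.8(2) / 4.12(1): `(1,0)` on `E¹ = {(x,0) : x < 0}`,
`(0,-1)` on `E² = {(0,y) : y > 0}`, and `(1,-1)` otherwise. -/
noncomputable def F₁₃ : ℝ × ℝ → ℝ × ℝ := fun X =>
  if X.2 = 0 ∧ X.1 < 0 then (1, 0)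
  else if X.1 = 0 ∧ 0 < X.2 then (0, -1)
  else (1, -1)

/-!
Along an integral curve of a field with discrete range, `F ∘ φ` is continuous with discrete
values on each open interval `(u, v)` of the definition, hence constant; so every complete
integral curve is affine with slope `F (φ t₀)` just to the right of each time `t₀`, and two such
curves with the same initial point agree by real induction. For `F₁₃`, a point moves along
`(1, -1)` until it meets `E¹` or `E²`, slides along that half-axis to the origin and then moves
along `(1, -1)` again; the reflection `(x, y) ↦ (-y, -x)` commutes with `F₁₃` and exchanges `E¹`
and `E²`. Points just below `E¹` never meet it, so `Φ(·, t)` jumps across `E¹`, while near the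
origin all three explicit formulas for `Φ(·, t)` agree.
-/

section IntegralCurve

variable {E : Type*} [NormedAddCommGroup E] [NormedSpace ℝ E]

lemma eDom_top : eDom ⊤ = Ici (0 : ℝ) := by
  ext t; simp [eDom]

lemma Finset.exists_next_or_top (D : Finset ℝ) (u : ℝ) :
    ∃ v : EReal, ((∃ w ∈ D, (w : EReal) = v) ∨ v = ⊤) ∧ (u : EReal) < v ∧
      ∀ w ∈ D, u < w → v ≤ w := by
  by_cases h : ∃ w ∈ D, u < w
  · have hne : (D.filter (u < ·)).Nonempty := by simpa [Finset.Nonempty] using h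
    obtain ⟨hmem, hlt⟩ := Finset.mem_filter.1 (Finset.min'_mem _ hne)
    exact ⟨_, .inl ⟨_, hmem, rfl⟩, EReal.coe_lt_coe_iff.2 hlt,
      fun w hw huw => EReal.coe_le_coe_iff.2 (Finset.min'_le _ _ (by simp [hw, huw]))⟩
  · push Not at h
    exact ⟨⊤, .inr rfl, EReal.coe_lt_top u, fun w hw huw => absurd (h w hw) huw.not_ge⟩

lemma Finset.exists_last_le (D : Finset ℝ) {t : ℝ} (hD : ∃ u ∈ D, u ≤ t) :
    ∃ u ∈ D, u ≤ t ∧ Set.Ioc u t ∩ D = ∅ := by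
  have hne : (D.filter (· ≤ t)).Nonempty := by simpa [Finset.Nonempty] using hD
  obtain ⟨hmem, hle⟩ := Finset.mem_filter.1 (Finset.max'_mem _ hne)
  refine ⟨_, hmem, hle, Set.eq_empty_of_forall_notMem ?_⟩
  rintro w ⟨⟨hlt, hwt⟩, hw⟩
  exact hlt.not_ge (Finset.le_max' _ _ (Finset.mem_filter.2 ⟨hw, hwt⟩))

theorem isNetIntegralCurve_top_of_piecewise_affine {F : E → E} {φ : ℝ → E} (D : Finset ℝ)
    (hD0 : 0 ∈ D) (hD : ∀ w ∈ D, 0 ≤ w) (hφ : ContinuousOn φ (Ici 0)) {X : E} (h0 : φ 0 = X)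
    (hpiece : ∀ u ∈ D, ∃ P c, ∀ t, u ≤ t → (∀ w ∈ D, u < w → t < w) →
      φ t = P + t • c ∧ F (φ t) = c) :
    IsNetIntegralCurve F X ⊤ φ := by
  refine ⟨EReal.zero_lt_top, h0, eDom_top ▸ hφ, D, D.countable_toSet, hD0,
    fun w hw => ⟨hD w hw, EReal.coe_lt_top w⟩, ?_, fun u hu => ?_, fun t ht => ?_⟩
  · rw [D.finite_toSet.isClosed.closure_eq]
    exact inter_subset_left
  · obtain ⟨P, c, hPc⟩ := hpiece u hu
    obtain ⟨v, hvD, huv, hvnext⟩ := D.exists_next_or_top u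
    have hpc : ∀ t : ℝ, u ≤ t → (t : EReal) < v → φ t = P + t • c ∧ F (φ t) = c :=
      fun t hut htv => hPc t hut fun w hw huw =>
        EReal.coe_lt_coe_iff.1 (htv.trans_le (hvnext w hw huw))
    obtain ⟨r, hur, hrv⟩ := EReal.lt_iff_exists_real_btwn.1 huv
    have hur' : u < r := EReal.coe_lt_coe_iff.1 hur
    refine ⟨v, hvD, huv, fun w hw huw => hvnext w hw (EReal.coe_lt_coe_iff.1 huw),
      fun t hut htv => ?_, continuousOn_const.congr fun t ht => (hpc t ?_ ht.2).2, ?_⟩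
    · have hut' : u < t := EReal.coe_lt_coe_iff.1 hut
      have hnear : φ =ᶠ[𝓝 t] fun s => P + s • c := by
        filter_upwards [lt_mem_nhds hut',
          (continuous_coe_real_ereal.tendsto t).eventually (gt_mem_nhds htv)] with s hus hsv
        exact (hpc s hus.le hsv).1
      rw [(hpc t hut'.le htv).2]
      simpa using (((hasDerivAt_id t).smul_const c).const_add P).congr_of_eventuallyEq hnear
    · exact (EReal.coe_lt_coe_iff.1 ht.1).le
    · rw [(hpc u le_rfl huv).2]
      refine tendsto_const_nhds.congr' (eventuallyEq_of_mem (Ioo_mem_nhdsGT hur') ?_)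
      exact fun t ht => ((hpc t ht.1.le ((EReal.coe_lt_coe_iff.2 ht.2).trans hrv)).2).symm
  · rw [eDom_top] at ht
    exact D.exists_last_le ⟨0, hD0, ht⟩

lemma eq_affine_of_hasDerivAt_Ioo {φ : ℝ → E} {c : E} {a b : ℝ}
    (hφ : ContinuousOn φ (Icc a b)) (hderiv : ∀ t ∈ Ioo a b, HasDerivAt φ c t) :
    ∀ t ∈ Icc a b, φ t = φ a + (t - a) • c := by
  have haff (t : ℝ) : HasDerivAt (fun s => φ a + (s - a) • c) c t := by
    simpa using (((hasDerivAt_id t).sub_const a).smul_const c).const_add (φ a)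
  refine eq_of_has_deriv_right_eq (f' := fun _ => c) (fun x hx => ?_)
    (fun x _ => (haff x).hasDerivWithinAt) hφ (by fun_prop) (by simp)
  obtain rfl | hax := hx.1.eq_or_lt
  · -- at the left endpoint, the right derivative is the limit of the derivatives
    have hmem : Ioo a b ∈ 𝓝[>] a := Ioo_mem_nhdsGT hx.2
    refine hasDerivWithinAt_Ici_of_tendsto_deriv
      (fun y hy => (hderiv y hy).differentiableAt.differentiableWithinAt)
      ((hφ a (left_mem_Icc.2 hx.2.le)).mono Ioo_subset_Icc_self) hmem ?_
    exact tendsto_const_nhds.congr' (eventuallyEq_of_mem hmem fun y hy => (hderiv y hy).deriv.symm)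
  · exact (hderiv x ⟨hax, hx.2⟩).hasDerivWithinAt

theorem IsNetIntegralCurve.eventually_eq_affine {F : E → E} (hF : IsDiscrete (range F))
    {X : E} {T : EReal} {φ : ℝ → E} (h : IsNetIntegralCurve F X T φ) {t₀ : ℝ}
    (ht₀ : t₀ ∈ eDom T) : ∀ᶠ t in 𝓝[≥] t₀, φ t = φ t₀ + (t - t₀) • F (φ t₀) := by
  obtain ⟨-, -, hcont, D, -, -, hDsub, -, hstruct, hcover⟩ := h
  obtain ⟨u, huD, hut₀, hIoc⟩ := hcover t₀ ht₀
  obtain ⟨v, hv, huv, -, hderiv, hFcont, hFlim⟩ := hstruct u huD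
  have hvT : v ≤ T := by
    rcases hv with ⟨w, hw, rfl⟩ | rfl
    exacts [(hDsub hw).2.le, le_rfl]
  have ht₀v : (t₀ : EReal) < v := by
    by_contra! hvt₀
    rcases hv with ⟨w, hw, rfl⟩ | rfl
    · exact hIoc.subset ⟨⟨EReal.coe_lt_coe_iff.1 huv, EReal.coe_le_coe_iff.1 hvt₀⟩, hw⟩
    · exact ht₀.2.not_ge hvt₀
  obtain ⟨b, ht₀b, hbv⟩ := EReal.lt_iff_exists_real_btwn.1 ht₀v
  have ht₀b' : t₀ < b := EReal.coe_lt_coe_iff.1 ht₀b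
  set I := {t : ℝ | (u : EReal) < t ∧ (t : EReal) < v}
  have hIoo : Ioo u b ⊆ I := fun t ht =>
    ⟨EReal.coe_lt_coe_iff.2 ht.1, (EReal.coe_lt_coe_iff.2 ht.2).trans hbv⟩
  have hI : IsPreconnected I := by
    refine OrdConnected.isPreconnected ⟨fun p hp q hq t ht => ⟨?_, ?_⟩⟩
    exacts [hp.1.trans_le (EReal.coe_le_coe_iff.2 ht.1),
      (EReal.coe_le_coe_iff.2 ht.2).trans_lt hq.2]
  -- `F ∘ φ` is continuous with values in a discrete set, hence constant on the interval `I`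
  have hconst : ∀ t ∈ I, F (φ t) = F (φ u) := fun t ht => by
    have hev : ∀ᶠ s in 𝓝[>] u, F (φ t) = F (φ s) :=
      eventually_of_mem (Ioo_mem_nhdsGT (hut₀.trans_lt ht₀b')) fun s hs =>
        hI.constant_of_mapsTo hF hFcont (fun s _ => mem_range_self _) ht (hIoo hs)
    exact tendsto_nhds_unique (tendsto_const_nhds.congr' hev) hFlim
  have hsub : Icc u b ⊆ eDom T := fun t ht =>
    ⟨(hDsub huD).1.trans ht.1, ((EReal.coe_le_coe_iff.2 ht.2).trans_lt hbv).trans_le hvT⟩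
  have haff : ∀ t ∈ Icc u b, φ t = φ u + (t - u) • F (φ u) :=
    eq_affine_of_hasDerivAt_Ioo (hcont.mono hsub) fun t ht =>
      hconst t (hIoo ht) ▸ hderiv t (hIoo ht).1 (hIoo ht).2
  have hFt₀ : F (φ t₀) = F (φ u) := by
    rcases hut₀.eq_or_lt with rfl | hlt
    exacts [rfl, hconst t₀ ⟨EReal.coe_lt_coe_iff.2 hlt, ht₀v⟩]
  filter_upwards [Ico_mem_nhdsGE ht₀b'] with t ht
  rw [hFt₀, haff t ⟨hut₀.trans ht.1, ht.2.le⟩, haff t₀ ⟨hut₀, ht₀b'.le⟩]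
  module

theorem eqOn_Ici_of_eventually_eq_affine {F : E → E} {ψ χ : ℝ → E}
    (hψ : ContinuousOn ψ (Ici 0)) (hχ : ContinuousOn χ (Ici 0)) (h0 : ψ 0 = χ 0)
    (hψF : ∀ t₀ ≥ 0, ∀ᶠ t in 𝓝[≥] t₀, ψ t = ψ t₀ + (t - t₀) • F (ψ t₀))
    (hχF : ∀ t₀ ≥ 0, ∀ᶠ t in 𝓝[≥] t₀, χ t = χ t₀ + (t - t₀) • F (χ t₀)) :
    EqOn ψ χ (Ici 0) := by
  intro b hb
  have hclosed : IsClosed ({t | ψ t = χ t} ∩ Icc 0 b) := by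
    rw [inter_comm]
    exact ((hψ.mono Icc_subset_Ici_self).prodMk
      (hχ.mono Icc_subset_Ici_self)).preimage_isClosed_of_isClosed isClosed_Icc isClosed_diagonal
  refine hclosed.Icc_subset_of_forall_mem_nhdsWithin h0 (fun x ⟨hx, hxI⟩ => ?_) ⟨hb, le_rfl⟩
  filter_upwards [nhdsWithin_mono _ Ioi_subset_Ici_self (hψF x hxI.1),
    nhdsWithin_mono _ Ioi_subset_Ici_self (hχF x hxI.1)] with t hψt hχt
  rw [hψt, hχt, show ψ x = χ x from hx]

theorem IsNetIntegralCurve.eqOn_Ici {F : E → E} (hF : IsDiscrete (range F)) {X : E}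
    {ψ χ : ℝ → E} (hψ : IsNetIntegralCurve F X ⊤ ψ) (hχ : IsNetIntegralCurve F X ⊤ χ) :
    EqOn ψ χ (Ici 0) :=
  eqOn_Ici_of_eventually_eq_affine (eDom_top ▸ hψ.2.2.1) (eDom_top ▸ hχ.2.2.1)
    (hψ.2.1.trans hχ.2.1.symm)
    (fun _ ht₀ => hψ.eventually_eq_affine hF (eDom_top ▸ ht₀))
    (fun _ ht₀ => hχ.eventually_eq_affine hF (eDom_top ▸ ht₀))

theorem IsNetIntegralCurve.map {F : E → E} {X : E} {T : EReal} {φ : ℝ → E}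
    (h : IsNetIntegralCurve F X T φ) (L : E →L[ℝ] E) (hL : ∀ Y, F (L Y) = L (F Y)) :
    IsNetIntegralCurve F (L X) T (L ∘ φ) := by
  obtain ⟨hT, h0, hcont, D, hDc, hD0, hDsub, hDcl, hstruct, hcover⟩ := h
  refine ⟨hT, by simp [h0], L.continuous.comp_continuousOn hcont, D, hDc, hD0, hDsub, hDcl,
    fun u hu => ?_, hcover⟩
  obtain ⟨v, hv, huv, hvnext, hderiv, hFcont, hFlim⟩ := hstruct u hu
  refine ⟨v, hv, huv, hvnext, fun t h1 h2 => ?_, ?_, ?_⟩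
  · simpa [hL] using L.hasFDerivAt.comp_hasDerivAt t (hderiv t h1 h2)
  · simp only [Function.comp_apply, hL]
    exact L.continuous.comp_continuousOn hFcont
  · simp only [Function.comp_apply, hL]
    exact (L.continuous.tendsto _).comp hFlim

end IntegralCurve

lemma not_continuousAt_of_eqOn {α β : Type*} [TopologicalSpace α] [TopologicalSpace β]
    [T2Space β] {f g : α → β} {s : Set α} {x : α} (hfg : EqOn f g s) (hg : ContinuousAt g x)
    (hx : x ∈ closure s) (hne : f x ≠ g x) : ¬ ContinuousAt f x := fun hf =>
  haveI := mem_closure_iff_nhdsWithin_neBot.1 hx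
  hne <| tendsto_nhds_unique ((hf.tendsto.mono_left nhdsWithin_le_nhds).congr'
    hfg.eventuallyEq_nhdsWithin) (hg.tendsto.mono_left nhdsWithin_le_nhds)

lemma continuousAt_of_forall_exists_eq {α β : Type*} [TopologicalSpace α] [TopologicalSpace β]
    {f : α → β} {x : α} {S : Set (α → β)} (hS : S.Finite)
    (hcont : ∀ g ∈ S, ContinuousAt g x ∧ g x = f x) (hf : ∀ y, ∃ g ∈ S, f y = g y) :
    ContinuousAt f x := by
  rw [ContinuousAt, tendsto_def]
  intro U hU
  have hall : ∀ᶠ y in 𝓝 x, ∀ g ∈ S, g y ∈ U :=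
    (eventually_all_finite hS).2 fun g hg => (hcont g hg).1 ((hcont g hg).2 ▸ hU)
  filter_upwards [hall] with y hy
  obtain ⟨g, hg, hfy⟩ := hf y
  rw [mem_preimage, hfy]
  exact hy g hg

def reflectAntidiag : ℝ × ℝ →L[ℝ] ℝ × ℝ :=
  -((ContinuousLinearMap.snd ℝ ℝ ℝ).prod (ContinuousLinearMap.fst ℝ ℝ ℝ))

@[simp] lemma reflectAntidiag_apply (X : ℝ × ℝ) : reflectAntidiag X = (-X.2, -X.1) := rfl

lemma reflectAntidiag_reflectAntidiag (X : ℝ × ℝ) : reflectAntidiag (reflectAntidiag X) = X := by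
  simp

lemma F₁₃_reflectAntidiag (X : ℝ × ℝ) : F₁₃ (reflectAntidiag X) = reflectAntidiag (F₁₃ X) := by
  obtain ⟨x, y⟩ := X
  simp only [F₁₃, reflectAntidiag_apply, neg_eq_zero, neg_lt_zero, Left.neg_pos_iff]
  split_ifs <;> simp_all

lemma F₁₃_of_mem_E₁ {x : ℝ} (hx : x < 0) : F₁₃ (x, 0) = (1, 0) := by
  simp [F₁₃, hx]

lemma F₁₃_of_not_mem {Y : ℝ × ℝ} (h₁ : ¬(Y.2 = 0 ∧ Y.1 < 0)) (h₂ : ¬(Y.1 = 0 ∧ 0 < Y.2)) :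
    F₁₃ Y = (1, -1) := by
  simp only [F₁₃, if_neg h₁, if_neg h₂]

lemma isDiscrete_range_F₁₃ : IsDiscrete (range F₁₃) := by
  refine (Set.toFinite {((1 : ℝ), (0 : ℝ)), (0, -1), (1, -1)}).subset ?_ |>.isDiscrete
  rintro _ ⟨X, rfl⟩
  unfold F₁₃
  split_ifs <;> simp

def HitsE₁ (X : ℝ × ℝ) : Prop := 0 ≤ X.2 ∧ X.1 + X.2 < 0

/-- Move along `(1, -1)` until `E¹` is reached, slide along `E¹` to the origin, then move
along `(1, -1)` again. -/
def slideE₁ (X : ℝ × ℝ) (t : ℝ) : ℝ × ℝ := (X.1 + t, max (X.2 - t) 0 + min (-(X.1 + t)) 0)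

lemma isNetIntegralCurve_slideE₁ {X : ℝ × ℝ} (hX : HitsE₁ X) :
    IsNetIntegralCurve F₁₃ X ⊤ (slideE₁ X) := by
  obtain ⟨x, y⟩ := X
  obtain ⟨hy, hxy⟩ : 0 ≤ y ∧ x + y < 0 := hX
  have hcont : Continuous (slideE₁ (x, y)) := by unfold slideE₁; fun_prop
  have h0 : slideE₁ (x, y) 0 = (x, y) := by
    simp [slideE₁, hy, (by linarith : x < 0).le]
  refine isNetIntegralCurve_top_of_piecewise_affine {0, y, -x} (by simp)
    (by simp [hy]; linarith) hcont.continuousOn h0 fun u _ => ?_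
  rcases lt_or_ge u y with huy | hyu
  · refine ⟨(x, y), (1, -1), fun t _ hnext => ?_⟩
    have hty : t < y := hnext y (by simp) huy
    have hval : slideE₁ (x, y) t = (x + t, y - t) := by
      simp only [slideE₁]
      rw [max_eq_left (by linarith), min_eq_right (by linarith), add_zero]
    rw [hval, F₁₃_of_not_mem (by rintro ⟨h, -⟩; linarith) (by rintro ⟨h, -⟩; linarith)]
    exact ⟨by ext <;> simp; ring, rfl⟩
  rcases lt_or_ge u (-x) with hux | hxu
  · refine ⟨(x, 0), (1, 0), fun t hut hnext => ?_⟩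
    have htx : t < -x := hnext (-x) (by simp) hux
    have hval : slideE₁ (x, y) t = (x + t, 0) := by
      simp only [slideE₁]
      rw [max_eq_right (by linarith), min_eq_right (by linarith), add_zero]
    rw [hval, F₁₃_of_mem_E₁ (by linarith)]
    exact ⟨by ext <;> simp, rfl⟩
  · refine ⟨(x, -x), (1, -1), fun t hut _ => ?_⟩
    have hval : slideE₁ (x, y) t = (x + t, -(x + t)) := by
      simp only [slideE₁]
      rw [max_eq_right (by linarith), min_eq_left (by linarith), zero_add]
    rw [hval, F₁₃_of_not_mem (by rintro ⟨-, h⟩; linarith) (by rintro ⟨h, h'⟩; linarith)]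
    exact ⟨by ext <;> simp; ring, rfl⟩

open Classical in
noncomputable def semiflow₁₃ (X : ℝ × ℝ) : ℝ → ℝ × ℝ :=
  if HitsE₁ X then slideE₁ X
  else if HitsE₁ (reflectAntidiag X) then reflectAntidiag ∘ slideE₁ (reflectAntidiag X)
  else fun t => X + t • (1, -1)

lemma semiflow₁₃_of_not_hits {X : ℝ × ℝ} (h₁ : ¬ HitsE₁ X) (h₂ : ¬ HitsE₁ (reflectAntidiag X)) :
    semiflow₁₃ X = fun t => X + t • (1, -1) := by
  simp only [semiflow₁₃, if_neg h₁, if_neg h₂]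

lemma isNetIntegralCurve_semiflow₁₃ (X : ℝ × ℝ) :
    IsNetIntegralCurve F₁₃ X ⊤ (semiflow₁₃ X) := by
  by_cases h₁ : HitsE₁ X
  · simpa [semiflow₁₃, h₁] using isNetIntegralCurve_slideE₁ h₁
  by_cases h₂ : HitsE₁ (reflectAntidiag X)
  · rw [semiflow₁₃, if_neg h₁, if_pos h₂]
    convert (isNetIntegralCurve_slideE₁ h₂).map reflectAntidiag F₁₃_reflectAntidiag using 2
    exact (reflectAntidiag_reflectAntidiag X).symm
  rw [semiflow₁₃_of_not_hits h₁ h₂]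
  refine isNetIntegralCurve_top_of_piecewise_affine {0} (by simp) (by simp) (by fun_prop)
    (by simp) fun u hu => ⟨X, (1, -1), fun t hut _ => ⟨rfl, F₁₃_of_not_mem ?_ ?_⟩⟩
  all_goals
    obtain rfl : u = 0 := Finset.mem_singleton.1 hu
    simp only [HitsE₁, reflectAntidiag_apply] at h₁ h₂
    simp only [Prod.fst_add, Prod.snd_add, Prod.smul_mk, smul_eq_mul]
    rintro ⟨h, h'⟩
  · exact h₁ ⟨by linarith, by linarith⟩
  · exact h₂ ⟨by linarith, by linarith⟩

lemma semiflow₁₃_reflectAntidiag (X : ℝ × ℝ) {t : ℝ} (ht : 0 ≤ t) :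
    semiflow₁₃ (reflectAntidiag X) t = reflectAntidiag (semiflow₁₃ X t) :=
  (isNetIntegralCurve_semiflow₁₃ _).eqOn_Ici isDiscrete_range_F₁₃
    ((isNetIntegralCurve_semiflow₁₃ X).map reflectAntidiag F₁₃_reflectAntidiag) ht

lemma not_continuousAt_semiflow₁₃_of_mem_E₁ {x t : ℝ} (hx : x < 0) (ht : 0 < t) :
    ¬ ContinuousAt (fun X => semiflow₁₃ X t) (x, 0) := by
  -- from below, `(x, 0)` is approached by points moving along `(1, -1)` forever
  refine not_continuousAt_of_eqOn (g := fun X => X + t • (1, -1)) (s := {X | X.2 < 0})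
    (fun X hX => ?_) (by fun_prop) ?_ ?_
  · have hX' : X.2 < 0 := hX
    rw [semiflow₁₃_of_not_hits (fun h => hX'.not_ge h.1)
      (fun h => by simp only [HitsE₁, reflectAntidiag_apply] at h; linarith)]
  · show (x, 0) ∈ closure (Prod.snd ⁻¹' Iio 0)
    rw [← isOpenMap_snd.preimage_closure_eq_closure_preimage continuous_snd, closure_Iio]
    exact le_refl (0 : ℝ)
  · have hhits : HitsE₁ (x, 0) := ⟨le_rfl, by simpa using hx⟩
    intro h
    have h2 := congrArg Prod.snd h
    simp only [semiflow₁₃, if_pos hhits, slideE₁, zero_sub, neg_add_rev, Prod.smul_mk,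
      smul_eq_mul, mul_one, mul_neg, Prod.mk_add_mk, zero_add] at h2
    rw [max_eq_right (by linarith), zero_add] at h2
    rcases min_cases (-t + -x) 0 with ⟨hm, -⟩ | ⟨hm, -⟩ <;> rw [hm] at h2 <;> linarith

lemma not_continuousAt_semiflow₁₃_of_mem_E₂ {y t : ℝ} (hy : 0 < y) (ht : 0 < t) :
    ¬ ContinuousAt (fun X => semiflow₁₃ X t) (0, y) := by
  intro h
  refine not_continuousAt_semiflow₁₃_of_mem_E₁ (neg_neg_of_pos hy) ht ?_
  have hσ : ContinuousAt (fun X => reflectAntidiag (semiflow₁₃ (reflectAntidiag X) t)) (-y, 0) :=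
    reflectAntidiag.continuous.continuousAt.comp
      (h.comp_of_eq reflectAntidiag.continuous.continuousAt (by simp))
  refine hσ.congr (Eventually.of_forall fun X => ?_)
  dsimp only
  rw [← semiflow₁₃_reflectAntidiag _ ht.le, reflectAntidiag_reflectAntidiag]

lemma continuousAt_semiflow₁₃_origin {t : ℝ} (ht : 0 ≤ t) :
    ContinuousAt (fun X => semiflow₁₃ X t) (0, 0) := by
  have hslide : slideE₁ (0, 0) t = (0, 0) + t • (1, -1) := by
    simp [slideE₁, ht]
  refine continuousAt_of_forall_exists_eq (S := {fun X => slideE₁ X t,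
    fun X => reflectAntidiag (slideE₁ (reflectAntidiag X) t), fun X => X + t • (1, -1)})
    (toFinite _) ?_ fun X => ?_
  · have horigin : semiflow₁₃ (0, 0) t = (0, 0) + t • (1, -1) := by
      rw [semiflow₁₃_of_not_hits (by simp [HitsE₁]) (by simp [HitsE₁])]
    rintro g (rfl | rfl | rfl)
    · exact ⟨by unfold slideE₁; fun_prop, hslide.trans horigin.symm⟩
    · exact ⟨by unfold slideE₁; fun_prop, by simp [hslide, horigin]⟩
    · exact ⟨by fun_prop, horigin.symm⟩
  · simp only [semiflow₁₃]
    split_ifs <;> simp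

/-- For the field `F₁₃`: (i) through every point of `ℝ²` there is a
unique complete integral curve, giving a semiflow `Φ`; (ii) for every point `P` of
`E¹ = {(x,0) : x < 0}` or `E² = {(0,y) : y > 0}` and every `t > 0`, `X ↦ Φ(X,t)` is
discontinuous at `P`; (iii) for every `t ≥ 0`, `X ↦ Φ(X,t)` is continuous at the origin. -/
theorem semiflow_discontinuous_along_event_sets :
    ∃ Φ : ℝ × ℝ → ℝ → ℝ × ℝ,
      (∀ X : ℝ × ℝ, IsNetIntegralCurve F₁₃ X (⊤ : EReal) (Φ X)) ∧
      (∀ (X : ℝ × ℝ) (ψ : ℝ → ℝ × ℝ), IsNetIntegralCurve F₁₃ X (⊤ : EReal) ψ →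
        ∀ t : ℝ, 0 ≤ t → ψ t = Φ X t) ∧
      (∀ P : ℝ × ℝ, ((P.2 = 0 ∧ P.1 < 0) ∨ (P.1 = 0 ∧ 0 < P.2)) →
        ∀ t : ℝ, 0 < t → ¬ ContinuousAt (fun X : ℝ × ℝ => Φ X t) P) ∧
      (∀ t : ℝ, 0 ≤ t → ContinuousAt (fun X : ℝ × ℝ => Φ X t) ((0 : ℝ), (0 : ℝ))) := by
  refine ⟨semiflow₁₃, isNetIntegralCurve_semiflow₁₃,
    fun X ψ hψ t ht => hψ.eqOn_Ici isDiscrete_range_F₁₃ (isNetIntegralCurve_semiflow₁₃ X) ht,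
    ?_, fun t ht => continuousAt_semiflow₁₃_origin ht⟩
  rintro ⟨x, y⟩ (⟨rfl, hx⟩ | ⟨rfl, hy⟩) t ht
  · exact not_continuousAt_semiflow₁₃_of_mem_E₁ hx ht
  · exact not_continuousAt_semiflow₁₃_of_mem_E₂ hy ht
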